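/- arXiv:2304.12575 — 2 statements merged into one kernel-verified Lean document; each statement's English description precedes it below -/
import Mathlib

section
/- Let A₀ be a real symmetric n×n matrix and a₀ ∈ ℝⁿ, and let V be the (2n+1)×(2n+1) symmetric traceless matrix with block form [[−A₀, a₀, 0], [a₀ᵀ, 0, −a₀ᵀ], [0, −a₀, A₀]]. Let H(t) denote the leading (n+1)×(n+1) submatrix of G(t) = exp(tV) (the submatrix formed by the first n+1 rows and first n+1 columns). Then there exist smooth maps Θ : ℝ → Sym⁺(n) (positive definite symmetric n×n matrices) and δ : ℝ → ℝⁿ with Θ(0) = Iₙ and δ(0) = 0 such that H(t) = [[Θ(t), δ(t)], [δ(t)ᵀ, 1 + δ(t)ᵀΘ(t)⁻¹δ(t)]] and the first n rows of H satisfy the geodesic equation (d/dt)(Θ(t) | δ(t)) = (−A₀ | a₀) · H(t). -/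
open Matrix
open NormedSpace

/-- Index type for `(2n+1)×(2n+1)` real matrices with block sizes `(n, 1, n)`. -/
abbrev Idx (n : ℕ) := (Fin n ⊕ Fin 1) ⊕ Fin n

/-- The `3×3`-block matrix with block sizes `(n,1,n)` and the given blocks. -/
def blk3 {n : ℕ} (A₁₁ : Matrix (Fin n) (Fin n) ℝ) (A₁₂ : Matrix (Fin n) (Fin 1) ℝ)
    (A₁₃ : Matrix (Fin n) (Fin n) ℝ) (A₂₁ : Matrix (Fin 1) (Fin n) ℝ)
    (A₂₂ : Matrix (Fin 1) (Fin 1) ℝ) (A₂₃ : Matrix (Fin 1) (Fin n) ℝ)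
    (A₃₁ : Matrix (Fin n) (Fin n) ℝ) (A₃₂ : Matrix (Fin n) (Fin 1) ℝ)
    (A₃₃ : Matrix (Fin n) (Fin n) ℝ) : Matrix (Idx n) (Idx n) ℝ :=
  Matrix.fromBlocks (Matrix.fromBlocks A₁₁ A₁₂ A₂₁ A₂₂) (Matrix.fromRows A₁₃ A₂₃)
    (Matrix.fromCols A₃₁ A₃₂) A₃₃

/-- The matrix `J = [[0,0,Iₙ],[0,1,0],[Iₙ,0,0]]` with block sizes `(n,1,n)`. -/
def Jmat (n : ℕ) : Matrix (Idx n) (Idx n) ℝ := blk3 0 0 1 0 1 0 1 0 0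

/-- The matrix `V = [[−A₀, a₀, 0], [a₀ᵀ, 0, −a₀ᵀ], [0, −a₀, A₀]]` with block sizes `(n,1,n)`. -/
def Vmat {n : ℕ} (A₀ : Matrix (Fin n) (Fin n) ℝ) (a₀ : Matrix (Fin n) (Fin 1) ℝ) :
    Matrix (Idx n) (Idx n) ℝ :=
  blk3 (-A₀) a₀ 0 a₀ᵀ 0 (-a₀ᵀ) 0 (-a₀) A₀

section Aux

variable {n : ℕ}

lemma Jmat_mul_Jmat : Jmat n * Jmat n = 1 := by
  ext (⟨i|i⟩|i) (⟨j|j⟩|j) <;>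
    simp [Jmat, blk3, mul_apply, Fintype.sum_sum_type, one_apply, Fin.eq_zero]

lemma Jmat_mul_Vmat_mul_Jmat (A₀ : Matrix (Fin n) (Fin n) ℝ) (a₀ : Matrix (Fin n) (Fin 1) ℝ) :
    Jmat n * Vmat A₀ a₀ * Jmat n = -(Vmat A₀ a₀) := by
  ext (⟨i|i⟩|i) (⟨j|j⟩|j) <;>
    simp [Jmat, Vmat, blk3, mul_apply, Fintype.sum_sum_type, one_apply, Fin.eq_zero]

lemma Vmat_transpose (A₀ : Matrix (Fin n) (Fin n) ℝ) (hA₀ : A₀ᵀ = A₀)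
    (a₀ : Matrix (Fin n) (Fin 1) ℝ) : (Vmat A₀ a₀)ᵀ = Vmat A₀ a₀ := by
  ext (⟨i|i⟩|i) (⟨j|j⟩|j) <;>
    simp [Vmat, blk3, transpose_apply] <;>
    exact congrFun (congrFun hA₀ _) _

end Aux

section Exp

attribute [local instance] Matrix.linftyOpNormedRing Matrix.linftyOpNormedAlgebra

variable {n : ℕ} (A₀ : Matrix (Fin n) (Fin n) ℝ) (a₀ : Matrix (Fin n) (Fin 1) ℝ)

lemma Jmat_inv : (Jmat n)⁻¹ = Jmat n := Matrix.inv_eq_right_inv Jmat_mul_Jmat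

lemma exp_symm (hA₀ : A₀ᵀ = A₀) (t : ℝ) :
    (NormedSpace.exp (t • Vmat A₀ a₀))ᵀ = NormedSpace.exp (t • Vmat A₀ a₀) := by
  rw [← Matrix.exp_transpose, transpose_smul, Vmat_transpose A₀ hA₀ a₀]

lemma exp_J_rel (t : ℝ) :
    NormedSpace.exp (t • Vmat A₀ a₀) * Jmat n * NormedSpace.exp (t • Vmat A₀ a₀) = Jmat n := by
  set P := NormedSpace.exp (t • Vmat A₀ a₀) with hP
  have h1 : Jmat n * (t • Vmat A₀ a₀) * (Jmat n)⁻¹ = -(t • Vmat A₀ a₀) := by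
    rw [Jmat_inv, Matrix.mul_smul, Matrix.smul_mul, Jmat_mul_Vmat_mul_Jmat, smul_neg]
  have hJu : IsUnit (Jmat n) := ⟨⟨Jmat n, Jmat n, Jmat_mul_Jmat, Jmat_mul_Jmat⟩, rfl⟩
  have h2 := Matrix.exp_conj (Jmat n) (t • Vmat A₀ a₀) hJu
  rw [h1, Jmat_inv, Matrix.exp_neg, ← hP] at h2
  -- h2 : P⁻¹ = Jmat n * P * Jmat n
  have hdet : IsUnit P.det := (Matrix.isUnit_iff_isUnit_det _).mp (Matrix.isUnit_exp _)
  have h3 : Jmat n * P = P⁻¹ * Jmat n := by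
    calc Jmat n * P = Jmat n * P * (Jmat n * Jmat n) := by rw [Jmat_mul_Jmat, mul_one]
    _ = (Jmat n * P * Jmat n) * Jmat n := by noncomm_ring
    _ = P⁻¹ * Jmat n := by rw [← h2]
  calc P * Jmat n * P = P * (Jmat n * P) := by rw [mul_assoc]
  _ = P * P⁻¹ * Jmat n := by rw [h3, mul_assoc]
  _ = Jmat n := by rw [Matrix.mul_nonsing_inv _ hdet, one_mul]

lemma posDef_transpose_mul_self {m : Type*} [Fintype m] [DecidableEq m]
    (M : Matrix m m ℝ) (hM : IsUnit M.det) : (Mᵀ * M).PosDef := by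
  have hsd : (Mᵀ * M).PosSemidef := by
    simpa using Matrix.posSemidef_conjTranspose_mul_self M
  refine Matrix.PosDef.of_dotProduct_mulVec_pos hsd.1 fun x hx => ?_
  have hMx : M *ᵥ x ≠ 0 := by
    intro h0
    have hinv : M⁻¹ *ᵥ (M *ᵥ x) = x := by
      rw [Matrix.mulVec_mulVec, Matrix.nonsing_inv_mul _ hM, Matrix.one_mulVec]
    exact hx (by rw [← hinv, h0, Matrix.mulVec_zero])
  have hcalc : star x ⬝ᵥ (Mᵀ * M) *ᵥ x = (M *ᵥ x) ⬝ᵥ (M *ᵥ x) := by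
    rw [star_trivial, ← Matrix.mulVec_mulVec, dotProduct_mulVec,
      Matrix.vecMul_transpose]
  rw [hcalc]
  have h1 : 0 ≤ (M *ᵥ x) ⬝ᵥ (M *ᵥ x) := Finset.sum_nonneg fun i _ => mul_self_nonneg _
  have h2 : (M *ᵥ x) ⬝ᵥ (M *ᵥ x) ≠ 0 := fun h => hMx (dotProduct_self_eq_zero.mp h)
  exact lt_of_le_of_ne h1 (Ne.symm h2)

lemma exp_posDef (hA₀ : A₀ᵀ = A₀) (t : ℝ) : (NormedSpace.exp (t • Vmat A₀ a₀)).PosDef := by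
  have hhalf : NormedSpace.exp (t • Vmat A₀ a₀)
      = NormedSpace.exp ((t/2) • Vmat A₀ a₀) * NormedSpace.exp ((t/2) • Vmat A₀ a₀) := by
    have hs : (t/2) • Vmat A₀ a₀ + (t/2) • Vmat A₀ a₀ = t • Vmat A₀ a₀ := by
      rw [← add_smul, add_halves]
    rw [← hs, Matrix.exp_add_of_commute _ _ (Commute.refl _)]
  rw [hhalf]
  nth_rewrite 1 [← exp_symm A₀ a₀ hA₀ (t/2)]
  exact posDef_transpose_mul_self _ ((Matrix.isUnit_iff_isUnit_det _).mp (Matrix.isUnit_exp _))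

end Exp

section Smooth

attribute [local instance] Matrix.linftyOpNormedRing Matrix.linftyOpNormedAlgebra

variable {n : ℕ}

noncomputable def entryCLM (p q : Idx n) : Matrix (Idx n) (Idx n) ℝ →L[ℝ] ℝ :=
  LinearMap.toContinuousLinearMap
    { toFun := fun M => M p q
      map_add' := fun _ _ => rfl
      map_smul' := fun _ _ => rfl }

lemma contDiff_exp_entry (V : Matrix (Idx n) (Idx n) ℝ) (p q : Idx n) :
    ContDiff ℝ (⊤ : ℕ∞) fun t : ℝ => NormedSpace.exp (t • V) p q := by
  have h1 : ContDiff ℝ (⊤ : ℕ∞) fun t : ℝ => t • V := contDiff_id.smul contDiff_const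
  have h2 : ContDiff ℝ (⊤ : ℕ∞) fun t : ℝ => NormedSpace.exp (t • V) := by
    rw [contDiff_iff_contDiffAt]
    intro t
    have ha : AnalyticAt ℝ (NormedSpace.exp : Matrix (Idx n) (Idx n) ℝ → _) (t • V) :=
      NormedSpace.analyticAt_exp_of_mem_ball _ (by
        rw [NormedSpace.expSeries_radius_eq_top]; exact edist_lt_top _ _)
    exact ha.contDiffAt.comp t h1.contDiffAt
  exact (entryCLM p q).contDiff.comp h2

lemma hasDerivAt_exp_entry (V : Matrix (Idx n) (Idx n) ℝ) (p q : Idx n) (t : ℝ) :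
    HasDerivAt (fun s : ℝ => NormedSpace.exp (s • V) p q) ((V * NormedSpace.exp (t • V)) p q) t := by
  have h := hasDerivAt_exp_smul_const' (𝕂 := ℝ) V t
  exact ((entryCLM p q).hasFDerivAt).comp_hasDerivAt t h

end Smooth

lemma posDef_toBlocks11 {α β : Type*} [Fintype α] [Fintype β] [DecidableEq α] [DecidableEq β]
    {P : Matrix (α ⊕ β) (α ⊕ β) ℝ} (h : P.PosDef) : P.toBlocks₁₁.PosDef := by
  refine Matrix.PosDef.of_dotProduct_mulVec_pos ?_ ?_
  · have h1 := h.1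
    ext i j
    have h2 := congrFun (congrFun h1 (Sum.inl i)) (Sum.inl j)
    simpa [Matrix.conjTranspose_apply, Matrix.toBlocks₁₁] using h2
  · intro x hx
    have hy : (Sum.elim x (0 : β → ℝ)) ≠ 0 :=
      fun h0 => hx (funext fun i => by simpa using congrFun h0 (Sum.inl i))
    have h2 := h.dotProduct_mulVec_pos hy
    have h3 : star (Sum.elim x (0 : β → ℝ)) ⬝ᵥ P *ᵥ Sum.elim x 0
        = star x ⬝ᵥ P.toBlocks₁₁ *ᵥ x := by
      simp [dotProduct, Matrix.mulVec, Matrix.toBlocks₁₁, Fintype.sum_sum_type]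
    rwa [h3] at h2

lemma fin1_transpose (M : Matrix (Fin 1) (Fin 1) ℝ) : Mᵀ = M := by
  ext i j
  rw [Matrix.transpose_apply, Subsingleton.elim i j]

lemma fin1_comm (a b : Matrix (Fin 1) (Fin 1) ℝ) : a * b = b * a := by
  ext i j
  simp [Matrix.mul_apply, Fin.sum_univ_one, Fin.eq_zero, mul_comm]

set_option maxHeartbeats 1000000 in
lemma key {n : ℕ} (H : Matrix (Fin n ⊕ Fin 1) (Fin n ⊕ Fin 1) ℝ)
    (B : Matrix (Fin n ⊕ Fin 1) (Fin n) ℝ)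
    (hHsym : Hᵀ = H) (hpos : H.PosDef)
    (hrel : (H * Matrix.fromBlocks 0 0 0 1 + B * Matrix.fromCols (1 : Matrix (Fin n) (Fin n) ℝ) (0 : Matrix (Fin n) (Fin 1) ℝ)) * H
        + (H * Matrix.fromRows (1 : Matrix (Fin n) (Fin n) ℝ) (0 : Matrix (Fin 1) (Fin n) ℝ)) * Bᵀ = Matrix.fromBlocks 0 0 0 1) :
    H = Matrix.fromBlocks H.toBlocks₁₁ H.toBlocks₁₂ (H.toBlocks₁₂)ᵀ
      (1 + (H.toBlocks₁₂)ᵀ * (H.toBlocks₁₁)⁻¹ * H.toBlocks₁₂) := by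
  set Θ := H.toBlocks₁₁ with hΘdef
  set δ := H.toBlocks₁₂ with hδdef
  set h := H.toBlocks₂₂ with hhdef
  set X := B.toRows₁ with hXdef
  set w := B.toRows₂ with hwdef
  have hδ' : H.toBlocks₂₁ = δᵀ := by
    ext i j
    simp only [Matrix.toBlocks₂₁, Matrix.toBlocks₁₂, Matrix.of_apply, Matrix.transpose_apply]
    exact (congrFun (congrFun hHsym (Sum.inr i)) (Sum.inl j)).symm
  have hΘsym : Θᵀ = Θ := by
    ext i j
    simp only [Matrix.toBlocks₁₁, Matrix.of_apply, Matrix.transpose_apply]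
    exact (congrFun (congrFun hHsym (Sum.inl i)) (Sum.inl j))
  have hH2 : H = Matrix.fromBlocks Θ δ δᵀ h := by
    conv_lhs => rw [← Matrix.fromBlocks_toBlocks H]
    rw [hδ']
  have hB2 : B = Matrix.fromRows X w := (Matrix.fromRows_toRows B).symm
  rw [hH2, hB2] at hrel
  simp only [Matrix.fromBlocks_multiply, Matrix.fromBlocks_add, Matrix.transpose_fromRows,
    Matrix.fromRows_mul_fromCols, Matrix.fromBlocks_mul_fromRows,
    Matrix.fromRows_mul_fromCols, mul_one, mul_zero, add_zero, zero_add,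
    Matrix.mul_zero, Matrix.mul_one, Matrix.fromBlocks_inj] at hrel
  obtain ⟨e11, e12, e21, e22⟩ := hrel
  have hΘpos : Θ.PosDef := posDef_toBlocks11 hpos
  have hΘdet : IsUnit Θ.det := (Matrix.isUnit_iff_isUnit_det _).mp hΘpos.isUnit
  have hΘisym : (Θ⁻¹)ᵀ = Θ⁻¹ := by rw [Matrix.transpose_nonsing_inv, hΘsym]
  have hw : Θ * wᵀ = -(X * δ) - δ * h := by
    calc Θ * wᵀ = (X * δ + δ * h + Θ * wᵀ) - X * δ - δ * h := by abel
    _ = -(X * δ) - δ * h := by rw [e12]; abel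
  have hwt : wᵀ = -(Θ⁻¹ * (X * δ)) - Θ⁻¹ * (δ * h) := by
    have h0 : Θ⁻¹ * (Θ * wᵀ) = Θ⁻¹ * (-(X * δ) - δ * h) := by rw [hw]
    rw [Matrix.nonsing_inv_mul_cancel_left _ _ hΘdet] at h0
    rw [h0, Matrix.mul_sub, Matrix.mul_neg]
  have h1 : δᵀ * wᵀ = -(δᵀ * (Θ⁻¹ * (X * δ))) - δᵀ * (Θ⁻¹ * δ) * h := by
    rw [hwt, Matrix.mul_sub, Matrix.mul_neg]
    simp only [Matrix.mul_assoc]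
  have e11' : δ * δᵀ = -(X * Θ) - Θ * Xᵀ := by
    calc δ * δᵀ = (X * Θ + δ * δᵀ + Θ * Xᵀ) - X * Θ - Θ * Xᵀ := by abel
    _ = -(X * Θ) - Θ * Xᵀ := by rw [e11]; abel
  have hdd : δᵀ * (Θ⁻¹ * δ) * (δᵀ * (Θ⁻¹ * δ))
      = -(δᵀ * (Θ⁻¹ * (X * δ))) - δᵀ * (Xᵀ * (Θ⁻¹ * δ)) := by
    have h0 : δᵀ * (Θ⁻¹ * δ) * (δᵀ * (Θ⁻¹ * δ))
        = δᵀ * (Θ⁻¹ * (δ * δᵀ * (Θ⁻¹ * δ))) := by simp only [Matrix.mul_assoc]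
    rw [h0, e11']
    simp only [Matrix.sub_mul, Matrix.neg_mul, Matrix.mul_sub, Matrix.mul_neg, Matrix.mul_assoc,
      Matrix.nonsing_inv_mul_cancel_left _ _ hΘdet, Matrix.mul_nonsing_inv_cancel_left _ _ hΘdet]
  have hs' : δᵀ * (Xᵀ * (Θ⁻¹ * δ)) = δᵀ * (Θ⁻¹ * (X * δ)) := by
    conv_rhs => rw [← fin1_transpose (δᵀ * (Θ⁻¹ * (X * δ)))]
    simp only [Matrix.transpose_mul, Matrix.transpose_transpose, hΘisym, Matrix.mul_assoc]
  have hwδ : w * δ = δᵀ * wᵀ := by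
    conv_lhs => rw [← fin1_transpose (w * δ)]
    simp only [Matrix.transpose_mul]
  have hh : h * h = 1 - w * δ - δᵀ * wᵀ := by
    calc h * h = (w * δ + h * h + δᵀ * wᵀ) - w * δ - δᵀ * wᵀ := by abel
    _ = 1 - w * δ - δᵀ * wᵀ := by rw [e22]
  have hcomm : δᵀ * (Θ⁻¹ * δ) * h = h * (δᵀ * (Θ⁻¹ * δ)) := fin1_comm _ _
  have hfinal : (h - δᵀ * (Θ⁻¹ * δ)) * (h - δᵀ * (Θ⁻¹ * δ)) = 1 := by
    have expand : (h - δᵀ * (Θ⁻¹ * δ)) * (h - δᵀ * (Θ⁻¹ * δ))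
        = h * h - h * (δᵀ * (Θ⁻¹ * δ)) - δᵀ * (Θ⁻¹ * δ) * h
          + δᵀ * (Θ⁻¹ * δ) * (δᵀ * (Θ⁻¹ * δ)) := by
      simp only [Matrix.sub_mul, Matrix.mul_sub]; abel
    rw [expand, hh, hdd, hs', hwδ, h1, hcomm]; abel
  haveI := Θ.invertibleOfIsUnitDet hΘdet
  have hct : δᴴ = δᵀ := by ext i j; simp [Matrix.conjTranspose_apply]
  have hps : (Matrix.fromBlocks Θ δ δᴴ h).PosSemidef := by
    rw [hct, ← hH2]; exact hpos.posSemidef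
  have hschur := (Matrix.PosDef.fromBlocks₁₁ δ h hΘpos).mp hps
  rw [hct] at hschur
  have hnn : 0 ≤ (h - δᵀ * Θ⁻¹ * δ) 0 0 := by
    have h2 := hschur.dotProduct_mulVec_nonneg (fun _ => 1)
    simpa [dotProduct, Matrix.mulVec, Fin.sum_univ_one] using h2
  have hsq : (h - δᵀ * (Θ⁻¹ * δ)) 0 0 * (h - δᵀ * (Θ⁻¹ * δ)) 0 0 = 1 := by
    have h3 := congrFun (congrFun hfinal 0) 0
    simpa [Matrix.mul_apply, Fin.sum_univ_one, Matrix.one_apply] using h3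
  have hval : h = 1 + δᵀ * Θ⁻¹ * δ := by
    rw [Matrix.mul_assoc] at hnn
    have hv : (h - δᵀ * (Θ⁻¹ * δ)) 0 0 = 1 := by nlinarith
    ext i j
    rw [Subsingleton.elim i (0 : Fin 1), Subsingleton.elim j (0 : Fin 1)]
    simp only [Matrix.sub_apply] at hv
    simp only [Matrix.add_apply, Matrix.one_apply_eq, Matrix.mul_assoc]
    linarith
  conv_lhs => rw [hH2]
  rw [hval]


section Main

attribute [local instance] Matrix.linftyOpNormedRing Matrix.linftyOpNormedAlgebra

variable {n : ℕ} (A₀ : Matrix (Fin n) (Fin n) ℝ) (a₀ : Matrix (Fin n) (Fin 1) ℝ)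

lemma expHsym (hA₀ : A₀ᵀ = A₀) (t : ℝ) :
    ((NormedSpace.exp (t • Vmat A₀ a₀)).toBlocks₁₁)ᵀ = (NormedSpace.exp (t • Vmat A₀ a₀)).toBlocks₁₁ := by
  have hsym := exp_symm A₀ a₀ hA₀ t
  ext i j
  simp only [Matrix.toBlocks₁₁, Matrix.of_apply, Matrix.transpose_apply]
  exact congrFun (congrFun hsym (Sum.inl i)) (Sum.inl j)

lemma expHrel (hA₀ : A₀ᵀ = A₀) (t : ℝ) :
    ((NormedSpace.exp (t • Vmat A₀ a₀)).toBlocks₁₁ * Matrix.fromBlocks 0 0 0 1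
        + (NormedSpace.exp (t • Vmat A₀ a₀)).toBlocks₁₂
          * Matrix.fromCols (1 : Matrix (Fin n) (Fin n) ℝ) (0 : Matrix (Fin n) (Fin 1) ℝ))
      * (NormedSpace.exp (t • Vmat A₀ a₀)).toBlocks₁₁
    + ((NormedSpace.exp (t • Vmat A₀ a₀)).toBlocks₁₁
          * Matrix.fromRows (1 : Matrix (Fin n) (Fin n) ℝ) (0 : Matrix (Fin 1) (Fin n) ℝ))
      * ((NormedSpace.exp (t • Vmat A₀ a₀)).toBlocks₁₂)ᵀ = Matrix.fromBlocks 0 0 0 1 := by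
  set P := NormedSpace.exp (t • Vmat A₀ a₀) with hPdef
  have hsym : Pᵀ = P := exp_symm A₀ a₀ hA₀ t
  have hC : P.toBlocks₂₁ = (P.toBlocks₁₂)ᵀ := by
    ext i j
    simp only [Matrix.toBlocks₂₁, Matrix.toBlocks₁₂, Matrix.of_apply, Matrix.transpose_apply]
    exact (congrFun (congrFun hsym (Sum.inr i)) (Sum.inl j)).symm
  have hP : P = Matrix.fromBlocks P.toBlocks₁₁ P.toBlocks₁₂ (P.toBlocks₁₂)ᵀ P.toBlocks₂₂ := by
    conv_lhs => rw [← Matrix.fromBlocks_toBlocks P]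
    rw [hC]
  have hPJ := exp_J_rel A₀ a₀ t
  rw [← hPdef, hP] at hPJ
  have hJb : Jmat n = Matrix.fromBlocks
      (Matrix.fromBlocks 0 0 0 1)
      (Matrix.fromRows (1 : Matrix (Fin n) (Fin n) ℝ) (0 : Matrix (Fin 1) (Fin n) ℝ))
      (Matrix.fromCols (1 : Matrix (Fin n) (Fin n) ℝ) (0 : Matrix (Fin n) (Fin 1) ℝ))
      (0 : Matrix (Fin n) (Fin n) ℝ) := rfl
  rw [hJb, Matrix.fromBlocks_multiply, Matrix.fromBlocks_multiply, Matrix.fromBlocks_inj] at hPJ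
  have h11 := hPJ.1
  simpa only [Matrix.mul_zero, add_zero] using h11

lemma rhs_eq (P : Matrix (Idx n) (Idx n) ℝ) (i : Fin n) (j : Fin n ⊕ Fin 1) :
    (Matrix.fromCols (-A₀) a₀ * P.toBlocks₁₁) i j
      = (Vmat A₀ a₀ * P) (Sum.inl (Sum.inl i)) (Sum.inl j) := by
  simp [Matrix.mul_apply, Fintype.sum_sum_type, Vmat, blk3, Matrix.toBlocks₁₁]

end Main




/-- The leading `(n+1)×(n+1)` submatrix `H(t)` of `exp(tV)` has the block form
`[[Θ(t), δ(t)], [δ(t)ᵀ, 1 + δ(t)ᵀΘ(t)⁻¹δ(t)]]` for smooth `Θ : ℝ → Sym⁺(n)`, `δ : ℝ → ℝⁿ` with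
`Θ(0) = Iₙ`, `δ(0) = 0`, and the first `n` rows of `H` satisfy the geodesic equation
`(d/dt)(Θ | δ) = (−A₀ | a₀) · H(t)`. -/
theorem stmt2 (n : ℕ) (A₀ : Matrix (Fin n) (Fin n) ℝ) (hA₀ : A₀ᵀ = A₀)
    (a₀ : Matrix (Fin n) (Fin 1) ℝ) :
    ∃ (Θ : ℝ → Matrix (Fin n) (Fin n) ℝ) (δ : ℝ → Matrix (Fin n) (Fin 1) ℝ),
      (∀ i j, ContDiff ℝ (⊤ : ℕ∞) fun t => Θ t i j) ∧
      (∀ i j, ContDiff ℝ (⊤ : ℕ∞) fun t => δ t i j) ∧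
      (∀ t, (Θ t).PosDef) ∧ Θ 0 = 1 ∧ δ 0 = 0 ∧
      (∀ t : ℝ, (NormedSpace.exp (t • Vmat A₀ a₀)).toBlocks₁₁ =
        Matrix.fromBlocks (Θ t) (δ t) (δ t)ᵀ (1 + (δ t)ᵀ * (Θ t)⁻¹ * δ t)) ∧
      (∀ (t : ℝ) (i : Fin n) (j : Fin n ⊕ Fin 1),
        HasDerivAt (fun s => Matrix.fromCols (Θ s) (δ s) i j)
          ((Matrix.fromCols (-A₀) a₀ *
            (NormedSpace.exp (t • Vmat A₀ a₀)).toBlocks₁₁) i j) t) := by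
  have h0 : NormedSpace.exp ((0:ℝ) • Vmat A₀ a₀) = 1 := by
    rw [zero_smul, NormedSpace.exp_zero]
  refine ⟨fun t => ((NormedSpace.exp (t • Vmat A₀ a₀)).toBlocks₁₁).toBlocks₁₁,
          fun t => ((NormedSpace.exp (t • Vmat A₀ a₀)).toBlocks₁₁).toBlocks₁₂,
          fun i j => contDiff_exp_entry (Vmat A₀ a₀) (Sum.inl (Sum.inl i)) (Sum.inl (Sum.inl j)),
          fun i j => contDiff_exp_entry (Vmat A₀ a₀) (Sum.inl (Sum.inl i)) (Sum.inl (Sum.inr j)),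
          fun t => posDef_toBlocks11 (posDef_toBlocks11 (exp_posDef A₀ a₀ hA₀ t)),
          ?_, ?_, ?_, ?_⟩
  · show (NormedSpace.exp ((0:ℝ) • Vmat A₀ a₀)).toBlocks₁₁.toBlocks₁₁ = 1
    rw [h0, show (1 : Matrix (Idx n) (Idx n) ℝ) = Matrix.fromBlocks 1 0 0 1 from
      Matrix.fromBlocks_one.symm, Matrix.toBlocks_fromBlocks₁₁,
      show (1 : Matrix (Fin n ⊕ Fin 1) (Fin n ⊕ Fin 1) ℝ) = Matrix.fromBlocks 1 0 0 1 from
      Matrix.fromBlocks_one.symm, Matrix.toBlocks_fromBlocks₁₁]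
  · show (NormedSpace.exp ((0:ℝ) • Vmat A₀ a₀)).toBlocks₁₁.toBlocks₁₂ = 0
    rw [h0, show (1 : Matrix (Idx n) (Idx n) ℝ) = Matrix.fromBlocks 1 0 0 1 from
      Matrix.fromBlocks_one.symm, Matrix.toBlocks_fromBlocks₁₁,
      show (1 : Matrix (Fin n ⊕ Fin 1) (Fin n ⊕ Fin 1) ℝ) = Matrix.fromBlocks 1 0 0 1 from
      Matrix.fromBlocks_one.symm, Matrix.toBlocks_fromBlocks₁₂]
  · intro t
    exact key _ _ (expHsym A₀ a₀ hA₀ t)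
      (posDef_toBlocks11 (exp_posDef A₀ a₀ hA₀ t)) (expHrel A₀ a₀ hA₀ t)
  · intro t i j
    rw [rhs_eq]
    cases j with
    | inl j => exact hasDerivAt_exp_entry (Vmat A₀ a₀) (Sum.inl (Sum.inl i)) (Sum.inl (Sum.inl j)) t
    | inr j => exact hasDerivAt_exp_entry (Vmat A₀ a₀) (Sum.inl (Sum.inl i)) (Sum.inl (Sum.inr j)) t
end

section
/- Let A₀ be a real symmetric n×n matrix and a₀ ∈ ℝⁿ, let V be the (2n+1)×(2n+1) matrix with block form [[−A₀, a₀, 0], [a₀ᵀ, 0, −a₀ᵀ], [0, −a₀, A₀]], and for each t let exp(tV) = G₁(t) G₂(t) be its block Cholesky decomposition with block sizes (n,1,n), where G₁(t) is block lower triangular and G₂(t) is block upper triangular with identity diagonal blocks. Then L(t) = G₁(t)⁻¹ V G₁(t) has block form [[−Q(t), r(t), 0], [a₀ᵀ, 0, −r(t)ᵀ], [0, −a₀, Q(t)ᵀ]] for some functions Q : ℝ → M(n×n, ℝ) and r : ℝ → ℝⁿ; in particular the upper-right n×n block and lower-left n×n block of L(t) vanish, its (n+1, n+1) entry is 0, and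 the blocks a₀ᵀ and −a₀ are constant in t. -/
/-!
Write `Mᵃ = J Mᵀ J` (`blockAntiTranspose`), an anti-automorphism of the matrix algebra. As `V`
is symmetric and `J V J = -V`, we get `Vᵃ = -V`, hence `exp(tV)ᵃ = exp(-tV) = exp(tV)⁻¹`.
Substituting `exp(tV) = G₁ G₂` yields `G₂ᵃ (G₁ᵃ G₁) G₂ = 1`. The involution `ᵃ` preserves block
lower triangular and block unit upper triangular matrices, so by uniqueness of the LU
factorisation `G₁ᵃ G₁ = 1`, i.e. `G₁⁻¹ = G₁ᵃ`. Consequently `L = G₁ᵃ V G₁` satisfies `Lᵃ = -L`,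
which fixes the `(2,2)`, `(2,3)` and `(3,3)` blocks; its upper-right block vanishes because it is
a product lower · `V` · lower; and `L G₂ = G₂ V` (since `V` commutes with `exp(tV)`) fixes the
`(2,1)`, `(3,1)` and `(3,2)` blocks as `a₀ᵀ`, `0` and `-a₀`.
-/

open Matrix

open NormedSpace

theorem mul_mul_mul_eq_mul_of_commute {M : Type*} [Monoid M] {k g₁ g₂ v : M} (hk : k * g₁ = 1)
    (hv : Commute v (g₁ * g₂)) : k * v * g₁ * g₂ = g₂ * v := by
  rw [mul_assoc _ g₁, mul_assoc, hv.eq, ← mul_assoc, ← mul_assoc, hk, one_mul]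

section BlockMatrices

variable {n : ℕ}

lemma blk3_mul (A₁₁ A₁₃ A₃₁ A₃₃ B₁₁ B₁₃ B₃₁ B₃₃ : Matrix (Fin n) (Fin n) ℝ)
    (A₁₂ A₃₂ B₁₂ B₃₂ : Matrix (Fin n) (Fin 1) ℝ) (A₂₁ A₂₃ B₂₁ B₂₃ : Matrix (Fin 1) (Fin n) ℝ)
    (A₂₂ B₂₂ : Matrix (Fin 1) (Fin 1) ℝ) :
    blk3 A₁₁ A₁₂ A₁₃ A₂₁ A₂₂ A₂₃ A₃₁ A₃₂ A₃₃ * blk3 B₁₁ B₁₂ B₁₃ B₂₁ B₂₂ B₂₃ B₃₁ B₃₂ B₃₃ =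
    blk3 (A₁₁*B₁₁ + A₁₂*B₂₁ + A₁₃*B₃₁) (A₁₁*B₁₂ + A₁₂*B₂₂ + A₁₃*B₃₂) (A₁₁*B₁₃ + A₁₂*B₂₃ + A₁₃*B₃₃)
      (A₂₁*B₁₁ + A₂₂*B₂₁ + A₂₃*B₃₁) (A₂₁*B₁₂ + A₂₂*B₂₂ + A₂₃*B₃₂) (A₂₁*B₁₃ + A₂₂*B₂₃ + A₂₃*B₃₃)
      (A₃₁*B₁₁ + A₃₂*B₂₁ + A₃₃*B₃₁) (A₃₁*B₁₂ + A₃₂*B₂₂ + A₃₃*B₃₂)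
      (A₃₁*B₁₃ + A₃₂*B₂₃ + A₃₃*B₃₃) := by
  ext ((i | i) | i) ((j | j) | j) <;>
    simp [blk3, Matrix.mul_apply, Fintype.sum_sum_type, Matrix.fromBlocks, Matrix.fromCols]

lemma blk3_transpose (A₁₁ A₁₃ A₃₁ A₃₃ : Matrix (Fin n) (Fin n) ℝ)
    (A₁₂ A₃₂ : Matrix (Fin n) (Fin 1) ℝ) (A₂₁ A₂₃ : Matrix (Fin 1) (Fin n) ℝ)
    (A₂₂ : Matrix (Fin 1) (Fin 1) ℝ) :
    (blk3 A₁₁ A₁₂ A₁₃ A₂₁ A₂₂ A₂₃ A₃₁ A₃₂ A₃₃)ᵀ =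
      blk3 A₁₁ᵀ A₂₁ᵀ A₃₁ᵀ A₁₂ᵀ A₂₂ᵀ A₃₂ᵀ A₁₃ᵀ A₂₃ᵀ A₃₃ᵀ := by
  ext ((i | i) | i) ((j | j) | j) <;> simp [blk3, Matrix.fromBlocks, Matrix.fromCols]

lemma neg_blk3 (A₁₁ A₁₃ A₃₁ A₃₃ : Matrix (Fin n) (Fin n) ℝ)
    (A₁₂ A₃₂ : Matrix (Fin n) (Fin 1) ℝ) (A₂₁ A₂₃ : Matrix (Fin 1) (Fin n) ℝ)
    (A₂₂ : Matrix (Fin 1) (Fin 1) ℝ) :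
    -blk3 A₁₁ A₁₂ A₁₃ A₂₁ A₂₂ A₂₃ A₃₁ A₃₂ A₃₃ =
      blk3 (-A₁₁) (-A₁₂) (-A₁₃) (-A₂₁) (-A₂₂) (-A₂₃) (-A₃₁) (-A₃₂) (-A₃₃) := by
  ext ((i | i) | i) ((j | j) | j) <;> simp [blk3, Matrix.fromBlocks, Matrix.fromCols]

lemma one_eq_blk3 : (1 : Matrix (Idx n) (Idx n) ℝ) = blk3 1 0 0 0 1 0 0 0 1 := by
  ext ((i | i) | i) ((j | j) | j) <;>
    simp [blk3, Matrix.fromBlocks, Matrix.fromCols, Matrix.one_apply]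

lemma blk3_inj {A₁₁ A₁₃ A₃₁ A₃₃ B₁₁ B₁₃ B₃₁ B₃₃ : Matrix (Fin n) (Fin n) ℝ}
    {A₁₂ A₃₂ B₁₂ B₃₂ : Matrix (Fin n) (Fin 1) ℝ} {A₂₁ A₂₃ B₂₁ B₂₃ : Matrix (Fin 1) (Fin n) ℝ}
    {A₂₂ B₂₂ : Matrix (Fin 1) (Fin 1) ℝ}
    (h : blk3 A₁₁ A₁₂ A₁₃ A₂₁ A₂₂ A₂₃ A₃₁ A₃₂ A₃₃ = blk3 B₁₁ B₁₂ B₁₃ B₂₁ B₂₂ B₂₃ B₃₁ B₃₂ B₃₃) :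
    A₁₁ = B₁₁ ∧ A₁₂ = B₁₂ ∧ A₁₃ = B₁₃ ∧ A₂₁ = B₂₁ ∧ A₂₂ = B₂₂ ∧ A₂₃ = B₂₃ ∧
      A₃₁ = B₃₁ ∧ A₃₂ = B₃₂ ∧ A₃₃ = B₃₃ := by
  simp only [blk3, fromBlocks_inj, fromRows_ext_iff, fromCols_ext_iff, and_assoc] at h
  tauto

def blockAntiTranspose (M : Matrix (Idx n) (Idx n) ℝ) : Matrix (Idx n) (Idx n) ℝ :=
  Jmat n * Mᵀ * Jmat n

lemma blockAntiTranspose_blk3 (A₁₁ A₁₃ A₃₁ A₃₃ : Matrix (Fin n) (Fin n) ℝ)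
    (A₁₂ A₃₂ : Matrix (Fin n) (Fin 1) ℝ) (A₂₁ A₂₃ : Matrix (Fin 1) (Fin n) ℝ)
    (A₂₂ : Matrix (Fin 1) (Fin 1) ℝ) :
    blockAntiTranspose (blk3 A₁₁ A₁₂ A₁₃ A₂₁ A₂₂ A₂₃ A₃₁ A₃₂ A₃₃) =
      blk3 A₃₃ᵀ A₂₃ᵀ A₁₃ᵀ A₃₂ᵀ A₂₂ᵀ A₁₂ᵀ A₃₁ᵀ A₂₁ᵀ A₁₁ᵀ := by
  rw [blockAntiTranspose, blk3_transpose, Jmat, blk3_mul, blk3_mul]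
  simp

lemma blockAntiTranspose_mul (M N : Matrix (Idx n) (Idx n) ℝ) :
    blockAntiTranspose (M * N) = blockAntiTranspose N * blockAntiTranspose M := by
  simp only [blockAntiTranspose, transpose_mul, mul_assoc, ← mul_assoc (Jmat n) (Jmat n),
    Jmat_mul_Jmat, one_mul]

lemma blockAntiTranspose_blockAntiTranspose (M : Matrix (Idx n) (Idx n) ℝ) :
    blockAntiTranspose (blockAntiTranspose M) = M := by
  have hJ : (Jmat n)ᵀ = Jmat n := by
    rw [Jmat, blk3_transpose]
    simp
  simp only [blockAntiTranspose, transpose_mul, transpose_transpose, hJ, mul_assoc,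
    Jmat_mul_Jmat, ← mul_assoc (Jmat n) (Jmat n), one_mul, mul_one]

lemma blockAntiTranspose_smul (c : ℝ) (M : Matrix (Idx n) (Idx n) ℝ) :
    blockAntiTranspose (c • M) = c • blockAntiTranspose M := by
  simp only [blockAntiTranspose, transpose_smul, mul_smul_comm, smul_mul_assoc]

lemma blockAntiTranspose_exp (M : Matrix (Idx n) (Idx n) ℝ) :
    blockAntiTranspose (exp M) = exp (blockAntiTranspose M) := by
  have hJ : (Jmat n)⁻¹ = Jmat n := inv_eq_left_inv Jmat_mul_Jmat
  have hconj := exp_conj (Jmat n) Mᵀ (IsUnit.of_mul_eq_one _ Jmat_mul_Jmat)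
  rw [hJ] at hconj
  rw [blockAntiTranspose, blockAntiTranspose, ← exp_transpose, hconj]

lemma blockAntiTranspose_exp_mul_exp {M : Matrix (Idx n) (Idx n) ℝ}
    (hM : blockAntiTranspose M = -M) : blockAntiTranspose (exp M) * exp M = 1 := by
  rw [blockAntiTranspose_exp, hM, ← exp_add_of_commute _ _ (Commute.refl M).neg_left,
    neg_add_cancel, exp_zero]

lemma blockAntiTranspose_Vmat {A₀ : Matrix (Fin n) (Fin n) ℝ} (hA₀ : A₀ᵀ = A₀)
    (a₀ : Matrix (Fin n) (Fin 1) ℝ) : blockAntiTranspose (Vmat A₀ a₀) = -Vmat A₀ a₀ := by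
  rw [Vmat, blockAntiTranspose_blk3, neg_blk3]
  simp [hA₀]

def IsBlockLower (M : Matrix (Idx n) (Idx n) ℝ) : Prop :=
  ∃ (B₁₁ : Matrix (Fin n) (Fin n) ℝ) (B₂₁ : Matrix (Fin 1) (Fin n) ℝ)
    (B₂₂ : Matrix (Fin 1) (Fin 1) ℝ) (B₃₁ : Matrix (Fin n) (Fin n) ℝ)
    (B₃₂ : Matrix (Fin n) (Fin 1) ℝ) (B₃₃ : Matrix (Fin n) (Fin n) ℝ),
    M = blk3 B₁₁ 0 0 B₂₁ B₂₂ 0 B₃₁ B₃₂ B₃₃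

def IsBlockUnitUpper (M : Matrix (Idx n) (Idx n) ℝ) : Prop :=
  ∃ (C₁₂ : Matrix (Fin n) (Fin 1) ℝ) (C₁₃ : Matrix (Fin n) (Fin n) ℝ)
    (C₂₃ : Matrix (Fin 1) (Fin n) ℝ), M = blk3 1 C₁₂ C₁₃ 0 1 C₂₃ 0 0 1

lemma IsBlockLower.mul {K K' : Matrix (Idx n) (Idx n) ℝ} (hK : IsBlockLower K)
    (hK' : IsBlockLower K') : IsBlockLower (K * K') := by
  obtain ⟨B₁₁, B₂₁, B₂₂, B₃₁, B₃₂, B₃₃, rfl⟩ := hK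
  obtain ⟨B₁₁', B₂₁', B₂₂', B₃₁', B₃₂', B₃₃', rfl⟩ := hK'
  rw [blk3_mul]
  simp only [Matrix.mul_zero, Matrix.zero_mul, add_zero, zero_add]
  exact ⟨_, _, _, _, _, _, rfl⟩

lemma IsBlockLower.blockAntiTranspose {K : Matrix (Idx n) (Idx n) ℝ} (hK : IsBlockLower K) :
    IsBlockLower (blockAntiTranspose K) := by
  obtain ⟨B₁₁, B₂₁, B₂₂, B₃₁, B₃₂, B₃₃, rfl⟩ := hK
  rw [blockAntiTranspose_blk3]
  simp only [transpose_zero]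
  exact ⟨_, _, _, _, _, _, rfl⟩

lemma IsBlockUnitUpper.blockAntiTranspose {U : Matrix (Idx n) (Idx n) ℝ}
    (hU : IsBlockUnitUpper U) : IsBlockUnitUpper (blockAntiTranspose U) := by
  obtain ⟨C₁₂, C₁₃, C₂₃, rfl⟩ := hU
  rw [blockAntiTranspose_blk3]
  simp only [transpose_zero, transpose_one]
  exact ⟨_, _, _, rfl⟩

lemma IsBlockLower.eq_one_of_mul_mul_eq_one {U K U' : Matrix (Idx n) (Idx n) ℝ}
    (hU : IsBlockUnitUpper U) (hK : IsBlockLower K) (hU' : IsBlockUnitUpper U')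
    (h : U * K * U' = 1) : K = 1 := by
  obtain ⟨C₁₂, C₁₃, C₂₃, rfl⟩ := hU
  obtain ⟨X₁₁, X₂₁, X₂₂, X₃₁, X₃₂, X₃₃, rfl⟩ := hK
  obtain ⟨C₁₂', C₁₃', C₂₃', rfl⟩ := hU'
  rw [blk3_mul, blk3_mul, one_eq_blk3] at h
  simp only [Matrix.one_mul, Matrix.mul_one, Matrix.zero_mul, Matrix.mul_zero, add_zero,
    zero_add] at h
  obtain ⟨e₁₁, -, -, e₂₁, e₂₂, -, e₃₁, e₃₂, e₃₃⟩ := blk3_inj h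
  have h₃₁ : X₃₁ = 0 := e₃₁
  have h₃₂ : X₃₂ = 0 := by simpa [h₃₁] using e₃₂
  have h₂₁ : X₂₁ = 0 := by simpa [h₃₁] using e₂₁
  rw [one_eq_blk3, h₃₁, h₃₂, h₂₁]
  simp_all

lemma IsBlockLower.mul_blk3_mul {K K' : Matrix (Idx n) (Idx n) ℝ} (hK : IsBlockLower K)
    (hK' : IsBlockLower K') (A₁₁ A₃₁ A₃₃ : Matrix (Fin n) (Fin n) ℝ)
    (A₁₂ A₃₂ : Matrix (Fin n) (Fin 1) ℝ) (A₂₁ A₂₃ : Matrix (Fin 1) (Fin n) ℝ)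
    (A₂₂ : Matrix (Fin 1) (Fin 1) ℝ) :
    ∃ M₁₁ M₁₂ M₂₁ M₂₂ M₂₃ M₃₁ M₃₂ M₃₃,
      K * blk3 A₁₁ A₁₂ 0 A₂₁ A₂₂ A₂₃ A₃₁ A₃₂ A₃₃ * K' =
        blk3 M₁₁ M₁₂ 0 M₂₁ M₂₂ M₂₃ M₃₁ M₃₂ M₃₃ := by
  obtain ⟨B₁₁, B₂₁, B₂₂, B₃₁, B₃₂, B₃₃, rfl⟩ := hK
  obtain ⟨B₁₁', B₂₁', B₂₂', B₃₁', B₃₂', B₃₃', rfl⟩ := hK'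
  rw [blk3_mul, blk3_mul]
  simp only [Matrix.mul_zero, Matrix.zero_mul, add_zero, zero_add]
  exact ⟨_, _, _, _, _, _, _, _, rfl⟩

lemma blk3_eq_of_blockAntiTranspose_eq_neg_of_mul_eq_mul_Vmat {U : Matrix (Idx n) (Idx n) ℝ}
    (hU : IsBlockUnitUpper U) (A₀ : Matrix (Fin n) (Fin n) ℝ) (a₀ : Matrix (Fin n) (Fin 1) ℝ)
    {M₁₁ M₃₁ M₃₃ : Matrix (Fin n) (Fin n) ℝ} {M₁₂ M₃₂ : Matrix (Fin n) (Fin 1) ℝ}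
    {M₂₁ M₂₃ : Matrix (Fin 1) (Fin n) ℝ} {M₂₂ : Matrix (Fin 1) (Fin 1) ℝ}
    (hanti : blockAntiTranspose (blk3 M₁₁ M₁₂ 0 M₂₁ M₂₂ M₂₃ M₃₁ M₃₂ M₃₃) =
      -blk3 M₁₁ M₁₂ 0 M₂₁ M₂₂ M₂₃ M₃₁ M₃₂ M₃₃)
    (hint : blk3 M₁₁ M₁₂ 0 M₂₁ M₂₂ M₂₃ M₃₁ M₃₂ M₃₃ * U = U * Vmat A₀ a₀) :
    blk3 M₁₁ M₁₂ 0 M₂₁ M₂₂ M₂₃ M₃₁ M₃₂ M₃₃ = blk3 M₁₁ M₁₂ 0 a₀ᵀ 0 (-M₁₂ᵀ) 0 (-a₀) (-M₁₁ᵀ) := by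
  obtain ⟨C₁₂, C₁₃, C₂₃, rfl⟩ := hU
  rw [blockAntiTranspose_blk3, neg_blk3] at hanti
  obtain ⟨-, -, -, -, a₂₂, a₂₃, -, -, a₃₃⟩ := blk3_inj hanti
  rw [Vmat, blk3_mul, blk3_mul] at hint
  simp only [Matrix.one_mul, Matrix.mul_one, Matrix.zero_mul, Matrix.mul_zero, add_zero,
    zero_add] at hint
  obtain ⟨-, -, -, i₂₁, -, -, i₃₁, i₃₂, -⟩ := blk3_inj hint
  have h₂₂ : M₂₂ = 0 := by
    ext i j
    obtain rfl := Subsingleton.elim i j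
    have := congrFun₂ a₂₂ i i
    rw [transpose_apply, neg_apply] at this
    rw [Matrix.zero_apply]
    linarith
  rw [i₂₁, i₃₁, ← i₃₂, i₃₁, h₂₂, a₂₃, a₃₃]
  simp

lemma blockAntiTranspose_mul_self_of_exp_eq_mul {M G₁ G₂ : Matrix (Idx n) (Idx n) ℝ}
    (hM : blockAntiTranspose M = -M) (hG₁ : IsBlockLower G₁) (hG₂ : IsBlockUnitUpper G₂)
    (hdec : exp M = G₁ * G₂) : blockAntiTranspose G₁ * G₁ = 1 := by
  have h := blockAntiTranspose_exp_mul_exp hM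
  rw [hdec, blockAntiTranspose_mul] at h
  refine (hG₁.blockAntiTranspose.mul hG₁).eq_one_of_mul_mul_eq_one
    hG₂.blockAntiTranspose hG₂ ?_
  simpa only [mul_assoc] using h

end BlockMatrices

/-- If `exp(tV) = G₁(t) G₂(t)` is the block Cholesky decomposition with
`G₁` block lower triangular and `G₂` block upper triangular with identity diagonal blocks,
then `L(t) = G₁(t)⁻¹ V G₁(t)` has the block form
`[[−Q(t), r(t), 0], [a₀ᵀ, 0, −r(t)ᵀ], [0, −a₀, Q(t)ᵀ]]`. -/
theorem stmt12 (n : ℕ) (A₀ : Matrix (Fin n) (Fin n) ℝ) (hA₀ : A₀ᵀ = A₀)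
    (a₀ : Matrix (Fin n) (Fin 1) ℝ) (G₁ G₂ : ℝ → Matrix (Idx n) (Idx n) ℝ)
    (hlow : ∀ t : ℝ, ∃ (B₁₁ : Matrix (Fin n) (Fin n) ℝ) (B₂₁ : Matrix (Fin 1) (Fin n) ℝ)
      (B₂₂ : Matrix (Fin 1) (Fin 1) ℝ) (B₃₁ : Matrix (Fin n) (Fin n) ℝ)
      (B₃₂ : Matrix (Fin n) (Fin 1) ℝ) (B₃₃ : Matrix (Fin n) (Fin n) ℝ),
      G₁ t = blk3 B₁₁ 0 0 B₂₁ B₂₂ 0 B₃₁ B₃₂ B₃₃)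
    (hup : ∀ t : ℝ, ∃ (C₁₂ : Matrix (Fin n) (Fin 1) ℝ) (C₁₃ : Matrix (Fin n) (Fin n) ℝ)
      (C₂₃ : Matrix (Fin 1) (Fin n) ℝ), G₂ t = blk3 1 C₁₂ C₁₃ 0 1 C₂₃ 0 0 1)
    (hdec : ∀ t : ℝ, NormedSpace.exp (t • Vmat A₀ a₀) = G₁ t * G₂ t) :
    ∀ t : ℝ, ∃ (Q : Matrix (Fin n) (Fin n) ℝ) (r : Matrix (Fin n) (Fin 1) ℝ),
      (G₁ t)⁻¹ * Vmat A₀ a₀ * G₁ t = blk3 (-Q) r 0 a₀ᵀ 0 (-rᵀ) 0 (-a₀) Qᵀ := by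
  intro t
  set V := Vmat A₀ a₀
  set G := G₁ t
  have hV : blockAntiTranspose V = -V := blockAntiTranspose_Vmat hA₀ a₀
  have hlowG : IsBlockLower G := hlow t
  have hG : blockAntiTranspose G * G = 1 := blockAntiTranspose_mul_self_of_exp_eq_mul
    (by rw [blockAntiTranspose_smul, hV, smul_neg]) hlowG (hup t) (hdec t)
  have hanti : blockAntiTranspose (blockAntiTranspose G * V * G) =
      -(blockAntiTranspose G * V * G) := by
    rw [blockAntiTranspose_mul, blockAntiTranspose_mul, blockAntiTranspose_blockAntiTranspose, hV]
    simp only [neg_mul, mul_neg, mul_assoc]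
  have hint : blockAntiTranspose G * V * G * G₂ t = G₂ t * V :=
    mul_mul_mul_eq_mul_of_commute hG (hdec t ▸ ((Commute.refl V).smul_right t).exp_right)
  obtain ⟨M₁₁, M₁₂, M₂₁, M₂₂, M₂₃, M₃₁, M₃₂, M₃₃, hL⟩ :=
    hlowG.blockAntiTranspose.mul_blk3_mul hlowG (-A₀) 0 A₀ a₀ (-a₀) a₀ᵀ (-a₀ᵀ) 0
  replace hL : blockAntiTranspose G * V * G = _ := hL
  rw [hL] at hanti hint
  rw [inv_eq_left_inv hG, hL, blk3_eq_of_blockAntiTranspose_eq_neg_of_mul_eq_mul_Vmat (hup t) A₀ a₀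
    hanti hint]
  exact ⟨-M₁₁, M₁₂, by rw [neg_neg, transpose_neg]⟩
end
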